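/- arXiv:1607.03465 — 8 statements merged into one kernel-verified Lean document; each statement's English description precedes it below -/
import Mathlib

section
/- There exist continuous maps f:X→X and g:Y→Y of compact metric spaces, a point x nonwandering for f, and a point y nonwandering for g, such that (x,y) is not nonwandering for f×g. -/
/-- `p` is nonwandering for `h`: every open neighborhood returns to itself at some positive time. -/
def NonwanderingPt {Z : Type*} [TopologicalSpace Z] (h : Z → Z) (p : Z) : Prop :=
  ∀ U : Set Z, IsOpen U → p ∈ U → ∃ n : ℕ, 0 < n ∧ (h^[n] '' U ∩ U).Nonempty

namespace NWAux

/-- The subshift of `ℕ → Bool` where any positive gap between two `true`s satisfies `P`. -/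
def GapSet (P : ℕ → Prop) : Set (ℕ → Bool) :=
  {u | ∀ m n : ℕ, 0 < n → u m = true → u (m + n) = true → P n}

theorem isClosed_gapSet (P : ℕ → Prop) : IsClosed (GapSet P) := by
  have : GapSet P = ⋂ (m : ℕ), ⋂ (n : ℕ),
      {u : ℕ → Bool | 0 < n → u m = true → u (m + n) = true → P n} := by
    ext u; simp [GapSet, Set.mem_iInter]
  rw [this]
  refine isClosed_iInter fun m => isClosed_iInter fun n => ?_
  by_cases hP : 0 < n ∧ ¬ P n
  · have : {u : ℕ → Bool | 0 < n → u m = true → u (m + n) = true → P n}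
        = ({u : ℕ → Bool | u m = true} ∩ {u | u (m + n) = true})ᶜ := by
      ext u
      simp only [Set.mem_setOf_eq, Set.mem_compl_iff, Set.mem_inter_iff]
      constructor
      · rintro h ⟨h1, h2⟩; exact hP.2 (h hP.1 h1 h2)
      · intro h hn h1 h2; exact absurd ⟨h1, h2⟩ h
    rw [this]
    refine IsOpen.isClosed_compl (IsOpen.inter ?_ ?_)
    · exact (isOpen_discrete ({true} : Set Bool)).preimage
        (continuous_apply m : Continuous fun u : ℕ → Bool => u m)
    · exact (isOpen_discrete ({true} : Set Bool)).preimage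
        (continuous_apply (m + n) : Continuous fun u : ℕ → Bool => u (m + n))
  · have : {u : ℕ → Bool | 0 < n → u m = true → u (m + n) = true → P n} = Set.univ := by
      ext u
      simp only [Set.mem_setOf_eq, Set.mem_univ, iff_true]
      intro hn h1 h2
      by_contra hPn
      exact hP ⟨hn, hPn⟩
    rw [this]; exact isClosed_univ

/-- The shift map. -/
def shift (u : ℕ → Bool) : ℕ → Bool := fun n => u (n + 1)

theorem continuous_shift : Continuous shift :=
  continuous_pi fun n => continuous_apply (n + 1)

theorem shift_iterate (u : ℕ → Bool) (k n : ℕ) : shift^[k] u n = u (n + k) := by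
  induction k generalizing n with
  | zero => rfl
  | succ k ih =>
    rw [Function.iterate_succ_apply']
    show shift^[k] u (n + 1) = u (n + (k + 1))
    rw [ih]
    congr 1
    omega

theorem shift_mem_gapSet {P : ℕ → Prop} {u : ℕ → Bool} (hu : u ∈ GapSet P) :
    shift u ∈ GapSet P := by
  intro m n hn h1 h2
  have h2' : u (m + 1 + n) = true := by
    rw [show m + 1 + n = m + n + 1 from by omega]; exact h2
  exact hu (m + 1) n hn h1 h2'

/-- The base point: `1 0 0 0 …`. -/
def pt : ℕ → Bool := fun n => decide (n = 0)

theorem pt_mem_gapSet (P : ℕ → Prop) : pt ∈ GapSet P := by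
  intro m n hn h1 h2
  simp only [pt, decide_eq_true_eq] at h1 h2
  omega

/-- The returning point: ones exactly at `0` and `L`. -/
def wpt (L : ℕ) : ℕ → Bool := fun n => decide (n = 0 ∨ n = L)

theorem wpt_mem_gapSet {P : ℕ → Prop} {L : ℕ} (_hL : 0 < L) (hPL : P L) :
    wpt L ∈ GapSet P := by
  intro m n hn h1 h2
  simp only [wpt, decide_eq_true_eq] at h1 h2
  have : n = L := by omega
  rwa [this]

section Sub

variable (P : ℕ → Prop)

/-- The subshift as a type. -/
def Sub : Type := GapSet P

instance : TopologicalSpace (Sub P) := instTopologicalSpaceSubtype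

noncomputable instance : MetricSpace (ℕ → Bool) := PiNat.metricSpace

noncomputable instance : MetricSpace (Sub P) := Subtype.metricSpace

instance : CompactSpace (Sub P) :=
  isCompact_iff_compactSpace.mp ((isClosed_gapSet P).isCompact)

/-- The shift on the subshift. -/
def subShift (u : Sub P) : Sub P := ⟨shift u.1, shift_mem_gapSet u.2⟩

theorem continuous_subShift : Continuous (subShift P) :=
  Continuous.subtype_mk (continuous_shift.comp continuous_subtype_val) _

theorem subShift_iterate (u : Sub P) (k : ℕ) :
    ((subShift P)^[k] u).1 = shift^[k] u.1 := by
  induction k with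
  | zero => rfl
  | succ k ih => rw [Function.iterate_succ_apply', Function.iterate_succ_apply', ← ih]; rfl

/-- The base point as an element of the subshift. -/
def subPt : Sub P := ⟨pt, pt_mem_gapSet P⟩

theorem nonwandering_subPt (hP : ∀ N : ℕ, ∃ L, N ≤ L ∧ 0 < L ∧ P L) :
    NonwanderingPt (subShift P) (subPt P) := by
  intro U hU hxU
  -- get a basic open set around pt in the ambient product space
  obtain ⟨V, hV, hUV⟩ := isOpen_induced_iff.mp hU
  have hptV : pt ∈ V := by
    have : subPt P ∈ Subtype.val ⁻¹' V := hUV ▸ hxU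
    exact this
  obtain ⟨I, t, ht, hsub⟩ := isOpen_pi_iff.mp hV pt hptV
  obtain ⟨N, hN⟩ : ∃ N : ℕ, ∀ i ∈ I, i < N := ⟨(I.sup id) + 1, fun i hi =>
    Nat.lt_succ_of_le (Finset.le_sup (f := id) hi)⟩
  obtain ⟨L, hNL, hLpos, hPL⟩ := hP N
  -- the witness point
  have hwmem : wpt L ∈ GapSet P := wpt_mem_gapSet hLpos hPL
  set w : Sub P := ⟨wpt L, hwmem⟩ with hw
  have hagree : ∀ i ∈ I, wpt L i = pt i := by
    intro i hi
    have hiN : i < N := hN i hi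
    simp only [wpt, pt]
    rw [decide_eq_decide]
    omega
  have hwV : wpt L ∈ V := by
    apply hsub
    intro i hi
    rw [hagree i hi]
    exact (ht i hi).2
  have hwU : w ∈ U := by rw [← hUV]; exact hwV
  refine ⟨L, hLpos, ?_⟩
  have hshift : (subShift P)^[L] w = subPt P := by
    apply Subtype.ext
    rw [subShift_iterate]
    funext n
    rw [shift_iterate]
    simp only [wpt, pt, hw, subPt]
    rw [decide_eq_decide]
    omega
  exact ⟨subPt P, ⟨w, hwU, hshift⟩, hxU⟩

end Sub

end NWAux

open NWAux in
/-- There are maps f, g and nonwandering points x, y with (x,y) not nonwandering for f × g. -/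
theorem exists_nonwandering_not_prod_nonwandering :
    ∃ (X : Type) (_ : MetricSpace X) (_ : CompactSpace X)
      (Y : Type) (_ : MetricSpace Y) (_ : CompactSpace Y)
      (f : X → X) (g : Y → Y) (x : X) (y : Y),
      Continuous f ∧ Continuous g ∧ NonwanderingPt f x ∧ NonwanderingPt g y ∧
        ¬ NonwanderingPt (Prod.map f g) (x, y) := by
  refine ⟨Sub Even, inferInstance, inferInstance, Sub Odd, inferInstance, inferInstance,
    subShift Even, subShift Odd, subPt Even, subPt Odd,
    continuous_subShift Even, continuous_subShift Odd,
    nonwandering_subPt Even (fun N => ⟨2 * N + 2, by omega, by omega, ⟨N + 1, by omega⟩⟩),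
    nonwandering_subPt Odd (fun N => ⟨2 * N + 1, by omega, by omega, ⟨N, by omega⟩⟩), ?_⟩
  intro hnw
  -- the cylinder neighborhood
  set W : Set (Sub Even × Sub Odd) :=
    {z | z.1.1 0 = true ∧ z.2.1 0 = true} with hWdef
  have hWopen : IsOpen W := by
    have h1 : Continuous fun z : Sub Even × Sub Odd => z.1.1 0 :=
      (continuous_apply 0).comp (continuous_subtype_val.comp continuous_fst)
    have h2 : Continuous fun z : Sub Even × Sub Odd => z.2.1 0 :=
      (continuous_apply 0).comp (continuous_subtype_val.comp continuous_snd)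
    have : W = (fun z : Sub Even × Sub Odd => z.1.1 0) ⁻¹' {true}
        ∩ (fun z : Sub Even × Sub Odd => z.2.1 0) ⁻¹' {true} := by
      ext z; simp [hWdef]
    rw [this]
    exact (h1.isOpen_preimage _ (isOpen_discrete _)).inter
      (h2.isOpen_preimage _ (isOpen_discrete _))
  have hmemW : (subPt Even, subPt Odd) ∈ W := by
    constructor <;> rfl
  obtain ⟨n, hn, z, ⟨z₀, hz₀W, hz₀⟩, hzW⟩ := hnw W hWopen hmemW
  rw [Prod.map_iterate] at hz₀
  have heven : Even n := by
    have h1 : z₀.1.1 0 = true := hz₀W.1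
    have h2 : z₀.1.1 n = true := by
      have hfst : (subShift Even)^[n] z₀.1 = z.1 := congrArg Prod.fst hz₀
      have : ((subShift Even)^[n] z₀.1).1 0 = true := by rw [hfst]; exact hzW.1
      rwa [subShift_iterate, shift_iterate, Nat.zero_add] at this
    exact z₀.1.2 0 n hn h1 (by rwa [Nat.zero_add])
  have hodd : Odd n := by
    have h1 : z₀.2.1 0 = true := hz₀W.2
    have h2 : z₀.2.1 n = true := by
      have hsnd : (subShift Odd)^[n] z₀.2 = z.2 := congrArg Prod.snd hz₀
      have : ((subShift Odd)^[n] z₀.2).1 0 = true := by rw [hsnd]; exact hzW.2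
      rwa [subShift_iterate, shift_iterate, Nat.zero_add] at this
    exact z₀.2.2 0 n hn h1 (by rwa [Nat.zero_add])
  exact (Nat.not_odd_iff_even.mpr heven) hodd
end

section
/- A point (x,y) is chain recurrent for the product map f×g if and only if x is chain recurrent for f and y is chain recurrent for g, where X×Y is equipped with the sum metric D((x1,y1),(x2,y2)) = d_X(x1,x2) + d_Y(y1,y2). -/
/-- `p` is chain recurrent for `h` with respect to the distance function `d`. -/
def ChainRecPt {Z : Type*} (d : Z → Z → ℝ) (h : Z → Z) (p : Z) : Prop :=
  ∀ ε > (0 : ℝ), ∃ n : ℕ, 1 ≤ n ∧ ∃ u : ℕ → Z, u 0 = p ∧ u n = p ∧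
    ∀ i < n, d (h (u i)) (u (i + 1)) ≤ ε

lemma mod_succ_chain {Z : Type*} (u : ℕ → Z) (n : ℕ) (hn : 0 < n) (h0 : u n = u 0)
    (i : ℕ) : u ((i + 1) % n) = u (i % n + 1) := by
  have h1 : (i + 1) % n = (i % n + 1) % n := by
    have hmd := Nat.mod_add_div i n
    conv_lhs => rw [show i + 1 = (i % n + 1) + n * (i / n) by omega]
    exact Nat.add_mul_mod_self_left _ _ _
  have h2 : i % n < n := Nat.mod_lt _ hn
  rcases lt_or_eq_of_le (Nat.succ_le_of_lt h2) with h | h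
  · rw [h1, Nat.mod_eq_of_lt h]
  · have h' : i % n + 1 = n := h
    rw [h1, h', Nat.mod_self, h0]

/-- Chain recurrence for the product map (with the sum metric) is equivalent to
chain recurrence in each coordinate. -/
theorem chainRec_prod_iff {X Y : Type*} [MetricSpace X] [CompactSpace X]
    [MetricSpace Y] [CompactSpace Y] (f : X → X) (g : Y → Y)
    (hf : Continuous f) (hg : Continuous g) (x : X) (y : Y) :
    ChainRecPt (fun p q : X × Y => dist p.1 q.1 + dist p.2 q.2) (Prod.map f g) (x, y) ↔
      ChainRecPt dist f x ∧ ChainRecPt dist g y := by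
  constructor
  · intro h
    constructor
    · intro ε hε
      obtain ⟨n, hn, w, hw0, hwn, hw⟩ := h ε hε
      refine ⟨n, hn, fun i => (w i).1, by simp [hw0], by simp [hwn], fun i hi => ?_⟩
      have h2 := hw i hi
      have hd : dist (g (w i).2) (w (i + 1)).2 ≥ 0 := dist_nonneg
      simp only [Prod.map] at h2 ⊢
      linarith
    · intro ε hε
      obtain ⟨n, hn, w, hw0, hwn, hw⟩ := h ε hε
      refine ⟨n, hn, fun i => (w i).2, by simp [hw0], by simp [hwn], fun i hi => ?_⟩
      have h2 := hw i hi
      have hd : dist (f (w i).1) (w (i + 1)).1 ≥ 0 := dist_nonneg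
      simp only [Prod.map] at h2 ⊢
      linarith
  · rintro ⟨hx, hy⟩ ε hε
    obtain ⟨n, hn, u, hu0, hun, hu⟩ := hx (ε / 2) (by linarith)
    obtain ⟨m, hm, v, hv0, hvm, hv⟩ := hy (ε / 2) (by linarith)
    have hnpos : 0 < n := hn
    have hmpos : 0 < m := hm
    refine ⟨n * m, Nat.one_le_iff_ne_zero.mpr (by positivity), fun i => (u (i % n), v (i % m)),
      ?_, ?_, fun i hi => ?_⟩
    · simp [Nat.mod_eq_of_lt hnpos, hu0, hv0]
    · simp [Nat.mul_mod_right, Nat.mul_mod_left, hu0, hv0]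
    · have h1 : u ((i + 1) % n) = u (i % n + 1) :=
        mod_succ_chain u n hnpos (by rw [hun, hu0]) i
      have h2 : v ((i + 1) % m) = v (i % m + 1) :=
        mod_succ_chain v m hmpos (by rw [hvm, hv0]) i
      have hu' := hu (i % n) (Nat.mod_lt _ hnpos)
      have hv' := hv (i % m) (Nat.mod_lt _ hmpos)
      simp only [Prod.map, h1, h2]
      linarith
end

section
/- Let f:X→X be a continuous map of a compact metric space, let x be strong chain recurrent for f, and write x ∼ x' if for every ε>0 and every compatible metric d' there are strong (ε,f,d')-chains from x to x' and from x' to x. Then for every ε>0 there exists n>0 such that for every x' with x ∼ x', there is a strong (ε,f,d)-chain of length exactly n from x to itself passing through x'. -/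
/-- A strong (ε, f, d)-chain of length `n ≥ 1` from `p` to `q`. -/
def IsStrongChain {Z : Type*} (d : Z → Z → ℝ) (h : Z → Z) (ε : ℝ) (n : ℕ) (u : ℕ → Z)
    (p q : Z) : Prop :=
  1 ≤ n ∧ u 0 = p ∧ u n = q ∧ (∑ i ∈ Finset.range n, d (h (u i)) (u (i + 1))) ≤ ε

/-- `p` is strong chain recurrent for `h` with respect to the distance function `d`. -/
def StrongChainRecPt {Z : Type*} (d : Z → Z → ℝ) (h : Z → Z) (p : Z) : Prop :=
  ∀ ε > (0 : ℝ), ∃ n u, IsStrongChain d h ε n u p p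

/-- `x ∼ x'`: for every ε > 0 and every compatible metric there are strong ε-chains
from `x` to `x'` and from `x'` to `x`. -/
def SimRel {X : Type*} [MetricSpace X] (f : X → X) (x x' : X) : Prop :=
  ∀ m : MetricSpace X,
    m.toUniformSpace.toTopologicalSpace = UniformSpace.toTopologicalSpace →
    ∀ ε > (0 : ℝ), (∃ n u, IsStrongChain m.dist f ε n u x x') ∧
      (∃ n u, IsStrongChain m.dist f ε n u x' x)

section Aux

variable {Z : Type*}

/-- Concatenation of two chains, the first one having length `n`. -/
def chainConcat (n : ℕ) (u v : ℕ → Z) : ℕ → Z := fun i => if i ≤ n then u i else v (i - n)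

lemma chainConcat_of_le {n : ℕ} (u v : ℕ → Z) {i : ℕ} (h : i ≤ n) :
    chainConcat n u v i = u i := if_pos h

lemma chainConcat_add {n : ℕ} {u v : ℕ → Z} (huv : u n = v 0) (j : ℕ) :
    chainConcat n u v (n + j) = v j := by
  rcases Nat.eq_zero_or_pos j with rfl | hj
  · simpa [chainConcat] using huv
  · have h : ¬ (n + j ≤ n) := by omega
    simp only [chainConcat, if_neg h, Nat.add_sub_cancel_left]

lemma IsStrongChain.mono {d : Z → Z → ℝ} {h : Z → Z} {ε ε' : ℝ} {n : ℕ} {u : ℕ → Z}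
    {p q : Z} (hu : IsStrongChain d h ε n u p q) (hle : ε ≤ ε') :
    IsStrongChain d h ε' n u p q :=
  ⟨hu.1, hu.2.1, hu.2.2.1, hu.2.2.2.trans hle⟩

lemma IsStrongChain.concat {d : Z → Z → ℝ} {h : Z → Z} {ε₁ ε₂ : ℝ} {n m : ℕ}
    {u v : ℕ → Z} {p q r : Z} (hu : IsStrongChain d h ε₁ n u p q)
    (hv : IsStrongChain d h ε₂ m v q r) :
    IsStrongChain d h (ε₁ + ε₂) (n + m) (chainConcat n u v) p r := by
  obtain ⟨hn, hu0, hun, hus⟩ := hu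
  obtain ⟨hm, hv0, hvm, hvs⟩ := hv
  have hq : u n = v 0 := by rw [hun, hv0]
  refine ⟨by omega, by rw [chainConcat_of_le u v (Nat.zero_le n)]; exact hu0,
    by rw [chainConcat_add hq m]; exact hvm, ?_⟩
  rw [Finset.sum_range_add]
  have e1 : ∀ i ∈ Finset.range n,
      d (h (chainConcat n u v i)) (chainConcat n u v (i + 1)) = d (h (u i)) (u (i + 1)) := by
    intro i hi
    rw [Finset.mem_range] at hi
    rw [chainConcat_of_le u v hi.le, chainConcat_of_le u v (by omega)]
  have e2 : ∀ j ∈ Finset.range m,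
      d (h (chainConcat n u v (n + j))) (chainConcat n u v (n + j + 1)) =
        d (h (v j)) (v (j + 1)) := by
    intro j _
    have hsucc : n + j + 1 = n + (j + 1) := by omega
    rw [chainConcat_add hq j, hsucc, chainConcat_add hq (j + 1)]
  rw [Finset.sum_congr rfl e1, Finset.sum_congr rfl e2]
  exact add_le_add hus hvs

/-- Replacing one interior point of a strong chain by a nearby point. -/
lemma IsStrongChain.replace {X : Type*} [MetricSpace X] {f : X → X} {ε δ η : ℝ} {n : ℕ}
    {u : ℕ → X} {p : X} (hu : IsStrongChain dist f ε n u p p) {i : ℕ}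
    (hi1 : 1 ≤ i) (hin : i < n) (x' : X)
    (hd : dist (u i) x' ≤ δ) (hfd : dist (f (u i)) (f x') ≤ η) :
    IsStrongChain dist f (ε + δ + η) n (Function.update u i x') p p := by
  classical
  obtain ⟨hn, h0, hnn, hs⟩ := hu
  set w := Function.update u i x' with hw
  have hw_ne : ∀ j, j ≠ i → w j = u j := fun j hj => Function.update_of_ne hj _ _
  have hwi : w i = x' := Function.update_self _ _ _
  refine ⟨hn, by rw [hw_ne 0 (by omega)]; exact h0,
    by rw [hw_ne n (by omega)]; exact hnn, ?_⟩
  have key : ∀ t ∈ Finset.range n,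
      dist (f (w t)) (w (t + 1)) ≤ dist (f (u t)) (u (t + 1)) +
        ((if t = i - 1 then δ else 0) + (if t = i then η else 0)) := by
    intro t _
    rcases eq_or_ne t (i - 1) with rfl | ht1
    · have hti : i - 1 ≠ i := by omega
      have ht1i : i - 1 + 1 = i := by omega
      rw [ht1i, hw_ne _ hti, hwi, if_pos rfl, if_neg hti]
      have htr := dist_triangle (f (u (i - 1))) (u i) x'
      linarith
    · rcases eq_or_ne t i with h | hti
      · rw [h, hwi, hw_ne _ (show i + 1 ≠ i by omega), if_neg (show i ≠ i - 1 by omega),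
            if_pos rfl]
        have htr := dist_triangle (f x') (f (u i)) (u (i + 1))
        have hcomm : dist (f x') (f (u i)) = dist (f (u i)) (f x') := dist_comm _ _
        linarith
      · have ht1' : t + 1 ≠ i := by omega
        rw [hw_ne _ hti, hw_ne _ ht1', if_neg ht1, if_neg hti]
        simp
  calc ∑ t ∈ Finset.range n, dist (f (w t)) (w (t + 1))
      ≤ ∑ t ∈ Finset.range n, (dist (f (u t)) (u (t + 1)) +
        ((if t = i - 1 then δ else 0) + (if t = i then η else 0))) :=
        Finset.sum_le_sum key
    _ = (∑ t ∈ Finset.range n, dist (f (u t)) (u (t + 1))) +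
        ((∑ t ∈ Finset.range n, if t = i - 1 then δ else 0) +
         (∑ t ∈ Finset.range n, if t = i then η else 0)) := by
        rw [Finset.sum_add_distrib, Finset.sum_add_distrib]
    _ ≤ ε + δ + η := by
        rw [Finset.sum_ite_eq' (Finset.range n) (i - 1) (fun _ => δ),
            Finset.sum_ite_eq' (Finset.range n) i (fun _ => η)]
        rw [if_pos (Finset.mem_range.mpr (by omega)),
            if_pos (Finset.mem_range.mpr hin)]
        linarith

/-- A single strong loop at `x` of small total cost passing through each point of a
given finite set of points similar to `x`. -/
lemma loop_through_finset {X : Type*} [MetricSpace X] {f : X → X} {x : X}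
    (hx : StrongChainRecPt dist f x) (T : Finset X) :
    (∀ y ∈ T, SimRel f x y) → ∀ c > (0 : ℝ), ∃ n u, IsStrongChain dist f c n u x x ∧
      ∀ y ∈ T, ∃ i, 1 ≤ i ∧ i < n ∧ u i = y := by
  classical
  induction T using Finset.induction_on with
  | empty =>
      intro _ c hc
      obtain ⟨n, u, h⟩ := hx c hc
      exact ⟨n, u, h, by simp⟩
  | @insert y T hyT ih =>
      intro hTS c hc
      have hy : SimRel f x y := hTS y (Finset.mem_insert_self _ _)
      obtain ⟨n, u, hu, hcov⟩ :=
        ih (fun z hz => hTS z (Finset.mem_insert_of_mem hz)) (c / 3) (by linarith)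
      obtain ⟨⟨a, A, hA⟩, ⟨b, B, hB⟩⟩ := hy _ rfl (c / 3) (by linarith)
      have hAB : IsStrongChain dist f (c / 3 + c / 3) (a + b) (chainConcat a A B) x x :=
        hA.concat hB
      have hcomb := hu.concat hAB
      have hcost : c / 3 + (c / 3 + c / 3) ≤ c := by linarith
      refine ⟨n + (a + b), chainConcat n u (chainConcat a A B), hcomb.mono hcost, ?_⟩
      intro z hz
      rcases Finset.mem_insert.mp hz with rfl | hzT
      · -- the new point `y`, at position `n + a`
        have hq : u n = chainConcat a A B 0 := by
          rw [chainConcat_of_le A B (Nat.zero_le a), hu.2.2.1, hA.2.1]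
        refine ⟨n + a, by have := hu.1; omega, by have := hB.1; omega, ?_⟩
        rw [chainConcat_add hq a, chainConcat_of_le A B le_rfl]
        exact hA.2.2.1
      · obtain ⟨i, hi1, hin, hui⟩ := hcov z hzT
        exact ⟨i, hi1, by omega, by rw [chainConcat_of_le u _ (by omega)]; exact hui⟩

end Aux

/-- For every ε > 0 there is a single length `n` such that every `x' ∼ x` lies on some
strong (ε, f, d)-chain of length `n` from `x` to itself. -/
theorem exists_uniform_length_strong_chain_through {X : Type*} [MetricSpace X]
    [CompactSpace X] (f : X → X) (hf : Continuous f) (x : X)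
    (hx : StrongChainRecPt dist f x) :
    ∀ ε > (0 : ℝ), ∃ n : ℕ, 0 < n ∧ ∀ x', SimRel f x x' →
      ∃ u : ℕ → X, IsStrongChain dist f ε n u x x ∧ ∃ i ≤ n, u i = x' := by
  classical
  intro ε hε
  -- uniform continuity of f
  obtain ⟨δ, hδ0, hδ⟩ := Metric.uniformContinuous_iff.mp
    (CompactSpace.uniformContinuous_of_continuous hf) (ε / 4) (by linarith)
  set δ' : ℝ := min δ (ε / 4) with hδ'def
  have hδ'0 : 0 < δ' := lt_min hδ0 (by linarith)
  set S : Set X := {x' | SimRel f x x'} with hSdef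
  have hSb : TotallyBounded S :=
    TotallyBounded.subset (Set.subset_univ S) isCompact_univ.totallyBounded
  obtain ⟨T, hTS, hTfin, hTcov⟩ := Metric.finite_approx_of_totallyBounded hSb δ' hδ'0
  obtain ⟨n, u, hu, hcov⟩ := loop_through_finset hx hTfin.toFinset
    (fun y hy => hTS (hTfin.mem_toFinset.mp hy)) (ε / 2) (by linarith)
  refine ⟨n, by have := hu.1; omega, ?_⟩
  intro x' hx'
  have hx'S : x' ∈ S := hx'
  obtain ⟨y, hyT, hxy'⟩ : ∃ y ∈ T, x' ∈ Metric.ball y δ' := by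
    simpa using hTcov hx'S
  have hdxy : dist x' y < δ' := Metric.mem_ball.mp hxy'
  obtain ⟨i, hi1, hin, hui⟩ := hcov y (hTfin.mem_toFinset.mpr hyT)
  have hd1 : dist (u i) x' ≤ ε / 4 := by
    rw [hui, dist_comm]
    exact le_trans hdxy.le (min_le_right _ _)
  have hd2 : dist (f (u i)) (f x') ≤ ε / 4 := by
    rw [hui]
    have : dist y x' < δ := by
      rw [dist_comm]
      exact lt_of_lt_of_le hdxy (min_le_left _ _)
    exact (hδ this).le
  have hrep := hu.replace hi1 hin x' hd1 hd2
  refine ⟨Function.update u i x', hrep.mono (by linarith), i, hin.le,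
    Function.update_self _ _ _⟩
end

section
/- For any point x strong chain recurrent for f and any ε>0, the set N(x,ε) of lengths n such that every point x' with x ∼ x' admits a strong (ε,f,d)-chain of length n from x to itself through x', contains an IP-set (all finite sums of distinct elements of some infinite set of positive integers). -/
set_option linter.unusedSectionVars false
set_option maxHeartbeats 1000000

/-- `N(x, ε)`: the set of lengths `n` such that every `x' ∼ x` lies on a strong
(ε, f, d)-chain of length `n` from `x` to itself. -/
def NSet {X : Type*} [MetricSpace X] (f : X → X) (x : X) (ε : ℝ) : Set ℕ :=
  {n | 0 < n ∧ ∀ x', SimRel f x x' →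
    ∃ u : ℕ → X, IsStrongChain dist f ε n u x x ∧ ∃ i ≤ n, u i = x'}


section Helpers
variable {X : Type*} [MetricSpace X] {f : X → X} {x : X}

lemma chain_mono {d : X → X → ℝ} {ε ε' : ℝ} {n : ℕ} {u : ℕ → X} {p q : X}
    (h : IsStrongChain d f ε n u p q) (hle : ε ≤ ε') : IsStrongChain d f ε' n u p q :=
  ⟨h.1, h.2.1, h.2.2.1, h.2.2.2.trans hle⟩

def catChain (n : ℕ) (u v : ℕ → X) : ℕ → X := fun i => if i ≤ n then u i else v (i - n)

lemma catChain_left {n : ℕ} {u v : ℕ → X} {i : ℕ} (h : i ≤ n) : catChain n u v i = u i := by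
  simp [catChain, h]

lemma catChain_right {n : ℕ} {u v : ℕ → X} (h : u n = v 0) (i : ℕ) :
    catChain n u v (n + i) = v i := by
  rcases Nat.eq_zero_or_pos i with rfl | hi
  · simpa [catChain] using h
  · have hni : ¬ (n + i ≤ n) := by omega
    simp [catChain, hni]

lemma chain_concat {ε1 ε2 : ℝ} {n m : ℕ} {u v : ℕ → X} {p q r : X}
    (h1 : IsStrongChain dist f ε1 n u p q) (h2 : IsStrongChain dist f ε2 m v q r) :
    IsStrongChain dist f (ε1 + ε2) (n + m) (catChain n u v) p r := by
  obtain ⟨hn, hu0, hun, hsu⟩ := h1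
  obtain ⟨hm, hv0, hvm, hsv⟩ := h2
  have hkey : u n = v 0 := by rw [hun, hv0]
  refine ⟨by omega, ?_, ?_, ?_⟩
  · rw [catChain_left (Nat.zero_le n), hu0]
  · rw [catChain_right hkey m, hvm]
  · rw [Finset.sum_range_add]
    have e1 : ∑ i ∈ Finset.range n, dist (f (catChain n u v i)) (catChain n u v (i+1))
        = ∑ i ∈ Finset.range n, dist (f (u i)) (u (i+1)) := by
      refine Finset.sum_congr rfl fun i hi => ?_
      have hi' := Finset.mem_range.mp hi
      rw [catChain_left (le_of_lt hi'), catChain_left hi']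
    have e2 : ∑ i ∈ Finset.range m, dist (f (catChain n u v (n + i))) (catChain n u v (n + i + 1))
        = ∑ i ∈ Finset.range m, dist (f (v i)) (v (i+1)) := by
      refine Finset.sum_congr rfl fun i hi => ?_
      rw [catChain_right hkey i, show n + i + 1 = n + (i+1) from rfl, catChain_right hkey (i+1)]
    rw [e1, e2]; exact add_le_add hsu hsv

/-- a loop at `x` of cost `δ` and length `n` -/
def Loop (f : X → X) (x : X) (δ : ℝ) (n : ℕ) : Prop :=
  ∃ u, IsStrongChain dist f δ n u x x

/-- a loop at `x` passing through `y` -/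
def Thru (f : X → X) (x : X) (δ : ℝ) (n : ℕ) (y : X) : Prop :=
  ∃ u, IsStrongChain dist f δ n u x x ∧ ∃ i ≤ n, u i = y

/-- a loop at `x` passing through `y` at an interior index -/
def ThruInt (f : X → X) (x : X) (δ : ℝ) (n : ℕ) (y : X) : Prop :=
  ∃ u, IsStrongChain dist f δ n u x x ∧ ∃ i, 0 < i ∧ i < n ∧ u i = y

lemma Loop.mono {δ δ' : ℝ} {n : ℕ} (h : Loop f x δ n) (hle : δ ≤ δ') : Loop f x δ' n :=
  h.imp fun _ hu => chain_mono hu hle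

lemma Thru.mono {δ δ' : ℝ} {n : ℕ} {y : X} (h : Thru f x δ n y) (hle : δ ≤ δ') :
    Thru f x δ' n y :=
  h.imp fun _ hu => ⟨chain_mono hu.1 hle, hu.2⟩

lemma ThruInt.mono {δ δ' : ℝ} {n : ℕ} {y : X} (h : ThruInt f x δ n y) (hle : δ ≤ δ') :
    ThruInt f x δ' n y :=
  h.imp fun _ hu => ⟨chain_mono hu.1 hle, hu.2⟩

lemma ThruInt.thru {δ : ℝ} {n : ℕ} {y : X} (h : ThruInt f x δ n y) : Thru f x δ n y := by
  obtain ⟨u, hu, i, hi0, hin, hui⟩ := h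
  exact ⟨u, hu, i, le_of_lt hin, hui⟩

lemma loop_concat {δ1 δ2 : ℝ} {n m : ℕ} (h1 : Loop f x δ1 n) (h2 : Loop f x δ2 m) :
    Loop f x (δ1 + δ2) (n + m) := by
  obtain ⟨u, hu⟩ := h1; obtain ⟨v, hv⟩ := h2
  exact ⟨_, chain_concat hu hv⟩

lemma thru_concat_loop {δ1 δ2 : ℝ} {n m : ℕ} {y : X} (h1 : Thru f x δ1 n y)
    (h2 : Loop f x δ2 m) : Thru f x (δ1 + δ2) (n + m) y := by
  obtain ⟨u, hu, i, hin, hui⟩ := h1; obtain ⟨v, hv⟩ := h2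
  exact ⟨_, chain_concat hu hv, i, by omega, by rw [catChain_left hin, hui]⟩

lemma loop_concat_thru {δ1 δ2 : ℝ} {n m : ℕ} {y : X} (h1 : Loop f x δ1 n)
    (h2 : Thru f x δ2 m y) : Thru f x (δ1 + δ2) (n + m) y := by
  obtain ⟨u, hu⟩ := h1; obtain ⟨v, hv, i, him, hvi⟩ := h2
  have hkey : u n = v 0 := by rw [hu.2.2.1, hv.2.1]
  exact ⟨_, chain_concat hu hv, n + i, by omega, by rw [catChain_right hkey i, hvi]⟩

lemma thruInt_concat_loop {δ1 δ2 : ℝ} {n m : ℕ} {y : X} (h1 : ThruInt f x δ1 n y)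
    (h2 : Loop f x δ2 m) : ThruInt f x (δ1 + δ2) (n + m) y := by
  obtain ⟨u, hu, i, hi0, hin, hui⟩ := h1; obtain ⟨v, hv⟩ := h2
  exact ⟨_, chain_concat hu hv, i, hi0, by omega, by rw [catChain_left (le_of_lt hin), hui]⟩

lemma loop_concat_thruInt {δ1 δ2 : ℝ} {n m : ℕ} {y : X} (h1 : Loop f x δ1 n)
    (h2 : ThruInt f x δ2 m y) : ThruInt f x (δ1 + δ2) (n + m) y := by
  obtain ⟨u, hu⟩ := h1; obtain ⟨v, hv, i, hi0, him, hvi⟩ := h2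
  have hkey : u n = v 0 := by rw [hu.2.2.1, hv.2.1]
  exact ⟨_, chain_concat hu hv, n + i, by omega, by omega, by rw [catChain_right hkey i, hvi]⟩

lemma chain_modify {δ : ℝ} {n i : ℕ} {u : ℕ → X} (h : IsStrongChain dist f δ n u x x)
    (hi0 : 0 < i) (hin : i < n) (x' : X) :
    IsStrongChain dist f (δ + dist (u i) x' + dist (f (u i)) (f x')) n
      (Function.update u i x') x x := by
  obtain ⟨hn, hu0, hun, hsum⟩ := h
  refine ⟨hn, ?_, ?_, ?_⟩
  · rw [Function.update_of_ne (by omega), hu0]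
  · rw [Function.update_of_ne (by omega), hun]
  · have bound : ∀ j ∈ Finset.range n,
        dist (f (Function.update u i x' j)) (Function.update u i x' (j+1))
          ≤ dist (f (u j)) (u (j+1))
            + ((if j = i - 1 then dist (u i) x' else 0)
               + (if j = i then dist (f (u i)) (f x') else 0)) := by
      intro j _
      by_cases hji : j = i
      · have hj1 : j + 1 ≠ i := by omega
        have hji' : j ≠ i - 1 := by omega
        rw [if_neg hji', if_pos hji, Function.update_of_ne hj1, hji, Function.update_self]
        have t1 : dist (f x') (u (i+1)) ≤ dist (f x') (f (u i)) + dist (f (u i)) (u (i+1)) :=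
          dist_triangle _ _ _
        rw [dist_comm (f x') (f (u i))] at t1
        linarith
      · by_cases hji1 : j = i - 1
        · have hj1 : j + 1 = i := by omega
          rw [if_pos hji1, if_neg hji, Function.update_of_ne hji, hj1, Function.update_self]
          have t1 : dist (f (u j)) x' ≤ dist (f (u j)) (u i) + dist (u i) x' :=
            dist_triangle _ _ _
          linarith
        · have hj1 : j + 1 ≠ i := by omega
          rw [if_neg hji1, if_neg hji, Function.update_of_ne hji, Function.update_of_ne hj1]
          simp
    calc ∑ j ∈ Finset.range n, dist (f (Function.update u i x' j)) (Function.update u i x' (j+1))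
        ≤ ∑ j ∈ Finset.range n, (dist (f (u j)) (u (j+1))
            + ((if j = i - 1 then dist (u i) x' else 0)
               + (if j = i then dist (f (u i)) (f x') else 0))) := Finset.sum_le_sum bound
      _ = (∑ j ∈ Finset.range n, dist (f (u j)) (u (j+1)))
            + ((∑ j ∈ Finset.range n, if j = i - 1 then dist (u i) x' else 0)
               + (∑ j ∈ Finset.range n, if j = i then dist (f (u i)) (f x') else 0)) := by
          rw [Finset.sum_add_distrib, Finset.sum_add_distrib]
      _ ≤ δ + dist (u i) x' + dist (f (u i)) (f x') := by
          rw [Finset.sum_ite_eq' (Finset.range n) (i-1) (fun _ => dist (u i) x'),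
              Finset.sum_ite_eq' (Finset.range n) i (fun _ => dist (f (u i)) (f x')),
              if_pos (Finset.mem_range.mpr (by omega)),
              if_pos (Finset.mem_range.mpr hin)]
          linarith

lemma thruInt_modify {δ η : ℝ} {L : ℕ} {t x' : X}
    (h : ThruInt f x δ L t) (h1 : dist t x' ≤ η) (h2 : dist (f t) (f x') ≤ η) :
    Thru f x (δ + η + η) L x' := by
  obtain ⟨u, hu, i, hi0, hiL, hui⟩ := h
  refine ⟨Function.update u i x', chain_mono (chain_modify hu hi0 hiL x') ?_,
    i, le_of_lt hiL, Function.update_self i x' u⟩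
  rw [hui]; linarith

end Helpers
section Main
variable {X : Type*} [MetricSpace X] {f : X → X} {x : X}

lemma simRel_chains {y : X} (h : SimRel f x y) {δ : ℝ} (hδ : 0 < δ) :
    (∃ n u, IsStrongChain dist f δ n u x y) ∧ (∃ n u, IsStrongChain dist f δ n u y x) :=
  h _ rfl δ hδ

lemma loop_of_rec (hx : StrongChainRecPt dist f x) {δ : ℝ} (hδ : 0 < δ) :
    ∃ L, 1 ≤ L ∧ Loop f x δ L := by
  obtain ⟨n, u, hc⟩ := hx δ hδ
  exact ⟨n, hc.1, u, hc⟩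

lemma finite_thru (hx : StrongChainRecPt dist f x) :
    ∀ T : Finset X, (∀ t ∈ T, SimRel f x t) → ∀ δ : ℝ, 0 < δ →
      ∃ L, 1 ≤ L ∧ Loop f x δ L ∧ ∀ t ∈ T, ThruInt f x δ L t := by
  classical
  intro T
  induction T using Finset.induction_on with
  | empty =>
    intro _ δ hδ
    obtain ⟨L, hL, hl⟩ := loop_of_rec hx hδ
    exact ⟨L, hL, hl, by simp⟩
  | @insert a T ha IH =>
    intro hT δ hδ
    obtain ⟨L1, hL1, loopW, thruT⟩ := IH (fun t ht => hT t (Finset.mem_insert_of_mem ht))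
      (δ/2) (by linarith)
    obtain ⟨⟨n1, u1, hc1⟩, ⟨n2, u2, hc2⟩⟩ :=
      simRel_chains (hT a (Finset.mem_insert_self a T)) (show (0:ℝ) < δ/4 by linarith)
    have hloopa : Loop f x (δ/4 + δ/4) (n1 + n2) := ⟨_, chain_concat hc1 hc2⟩
    have hthru_a : ThruInt f x (δ/4 + δ/4) (n1 + n2) a := by
      refine ⟨_, chain_concat hc1 hc2, n1, hc1.1, by have := hc2.1; omega, ?_⟩
      rw [catChain_left (le_refl n1), hc1.2.2.1]
    refine ⟨L1 + (n1 + n2), by omega, ?_, ?_⟩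
    · exact (loop_concat loopW hloopa).mono (by linarith)
    · intro t ht
      rcases Finset.mem_insert.mp ht with rfl | ht'
      · exact (loop_concat_thruInt loopW hthru_a).mono (by linarith)
      · exact (thruInt_concat_loop (thruT t ht') hloopa).mono (by linarith)

lemma thru_all [CompactSpace X] (hC : Continuous f) (hx : StrongChainRecPt dist f x)
    {δ : ℝ} (hδ : 0 < δ) :
    ∃ L, 1 ≤ L ∧ Loop f x δ L ∧ ∀ x', SimRel f x x' → Thru f x (3*δ) L x' := by
  classical
  obtain ⟨η, hη, hmod⟩ := Metric.uniformContinuous_iff.mp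
    (CompactSpace.uniformContinuous_of_continuous hC) δ hδ
  have hη' : (0:ℝ) < min η δ := lt_min hη hδ
  have htb : TotallyBounded {x' : X | SimRel f x x'} :=
    (isCompact_univ.totallyBounded).subset (Set.subset_univ _)
  obtain ⟨T, hTsub, hTfin, hTcov⟩ :=
    totallyBounded_iff_subset.mp htb _ (Metric.dist_mem_uniformity hη')
  obtain ⟨L, hL, hloop, hthru⟩ := finite_thru hx hTfin.toFinset
    (fun t ht => hTsub (hTfin.mem_toFinset.mp ht)) δ hδ
  refine ⟨L, hL, hloop, fun x' hx' => ?_⟩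
  obtain ⟨t, htη, htT, htδ⟩ : ∃ t, dist x' t < η ∧ t ∈ T ∧ dist x' t < δ := by
    have := hTcov hx'
    simpa using this
  have h1 : dist t x' ≤ δ := by rw [dist_comm]; exact htδ.le
  have h2 : dist (f t) (f x') ≤ δ := by
    have ht' : dist t x' < η := by rw [dist_comm]; exact htη
    exact (hmod ht').le
  exact (thruInt_modify (hthru t (hTfin.mem_toFinset.mpr htT)) h1 h2).mono (by linarith)

lemma loop_rep {δ : ℝ} {L : ℕ} (h : Loop f x δ L) :
    ∀ k : ℕ, 1 ≤ k → Loop f x ((k:ℝ) * δ) (k * L) := by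
  intro k hk
  induction k with
  | zero => omega
  | succ k IH =>
    rcases Nat.eq_zero_or_pos k with rfl | hk'
    · simpa using h
    · have hcat := loop_concat h (IH hk')
      have hlen : L + k * L = (k+1) * L := by ring
      have hcost : δ + (k:ℝ) * δ = ((k+1 : ℕ):ℝ) * δ := by push_cast; ring
      rw [hlen, hcost] at hcat
      exact hcat

lemma thru_rep {δ c : ℝ} {L : ℕ} {y : X} (hl : Loop f x δ L) (ht : Thru f x c L y) :
    ∀ k : ℕ, 1 ≤ k → Thru f x (c + ((k:ℝ) - 1) * δ) (k * L) y := by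
  intro k hk
  induction k with
  | zero => omega
  | succ k IH =>
    rcases Nat.eq_zero_or_pos k with rfl | hk'
    · simpa using ht.mono (le_of_eq (by push_cast; ring))
    · have hcat := loop_concat_thru hl (IH hk')
      have hlen : L + k * L = (k+1) * L := by ring
      have hcost : δ + (c + ((k:ℝ) - 1) * δ) = c + (((k+1 : ℕ):ℝ) - 1) * δ := by
        push_cast; ring
      rw [hlen, hcost] at hcat
      exact hcat

lemma step_lemma [CompactSpace X] (hC : Continuous f) (hx : StrongChainRecPt dist f x)
    (B : ℕ) {δ c : ℝ} (hδ : 0 < δ) (hδc : δ ≤ c) :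
    ∃ L, B < L ∧ Loop f x δ L ∧ ∀ x', SimRel f x x' → Thru f x c L x' := by
  set k := B + 1 with hk
  have hk2 : (0:ℝ) < (k:ℝ) + 2 := by positivity
  set δ' := δ / ((k:ℝ) + 2) with hδ'
  have hδ'pos : 0 < δ' := by positivity
  obtain ⟨L0, hL0, hloop0, hthru0⟩ := thru_all hC hx hδ'pos
  have hkk : (k:ℝ) + 2 ≠ 0 := ne_of_gt hk2
  refine ⟨k * L0, ?_, ?_, ?_⟩
  · have : k ≤ k * L0 := Nat.le_mul_of_pos_right k (by omega)
    omega
  · refine (loop_rep hloop0 k (by omega)).mono ?_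
    rw [hδ', mul_div_assoc', div_le_iff₀ hk2]
    nlinarith [hδ.le, Nat.cast_nonneg (α := ℝ) k]
  · intro x' hx'
    refine (thru_rep hloop0 (hthru0 x' hx') k (by omega)).mono ?_
    have heq : 3*δ' + ((k:ℝ)-1)*δ' = δ := by
      rw [hδ']; field_simp; ring
    linarith

end Main

/-- `N(x, ε)` contains an IP-set: all finite sums of distinct elements of some infinite
set of positive integers. -/
theorem NSet_contains_IP {X : Type*} [MetricSpace X] [CompactSpace X]
    (f : X → X) (hf : Continuous f) (x : X) (hx : StrongChainRecPt dist f x)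
    (ε : ℝ) (hε : 0 < ε) :
    ∃ s : Set ℕ, s.Infinite ∧ (∀ m ∈ s, 0 < m) ∧
      ∀ F : Finset ℕ, F.Nonempty → ↑F ⊆ s → (∑ m ∈ F, m) ∈ NSet f x ε := by
  classical
  have key : ∀ (B m : ℕ), ∃ L, B < L ∧ Loop f x (ε/2^(m+3)) L ∧
      ∀ x', SimRel f x x' → Thru f x (ε/2) L x' := by
    intro B m
    refine step_lemma hf hx B (by positivity) ?_
    have h2 : (2:ℝ) ≤ 2^(m+3) := by
      calc (2:ℝ) = 2^1 := (pow_one 2).symm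
        _ ≤ 2^(m+3) := by gcongr <;> norm_num
    gcongr
  choose g hg1 hg2 hg3 using key
  let a : ℕ → ℕ := fun m => Nat.rec (g 0 0) (fun m p => g p (m+1)) m
  have ha0 : a 0 = g 0 0 := rfl
  have haS : ∀ m, a (m+1) = g (a m) (m+1) := fun m => rfl
  have hmono : StrictMono a := strictMono_nat_of_lt_succ fun m => by
    rw [haS]; exact hg1 (a m) (m+1)
  have haP : ∀ m, Loop f x (ε/2^(m+3)) (a m) := by
    intro m; cases m with
    | zero => exact hg2 0 0
    | succ m => rw [haS]; exact hg2 (a m) (m+1)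
  have haT : ∀ m, ∀ x', SimRel f x x' → Thru f x (ε/2) (a m) x' := by
    intro m; cases m with
    | zero => exact hg3 0 0
    | succ m => rw [haS]; exact hg3 (a m) (m+1)
  have hapos : ∀ m, 0 < a m := by
    intro m; cases m with
    | zero => exact hg1 0 0
    | succ m => have := hg1 (a m) (m+1); rw [haS]; omega
  refine ⟨Set.range a, Set.infinite_range_of_injective hmono.injective, ?_, ?_⟩
  · rintro _ ⟨m, rfl⟩; exact hapos m
  · intro F hFne hFsub
    set G : Finset ℕ := F.preimage a (Function.Injective.injOn hmono.injective) with hG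
    have himg : G.image a = F := by
      rw [hG, Finset.image_preimage]
      exact Finset.filter_true_of_mem fun b hb => hFsub hb
    have hGne : G.Nonempty := by
      by_contra hemp
      rw [Finset.not_nonempty_iff_eq_empty] at hemp
      rw [hemp, Finset.image_empty] at himg
      exact hFne.ne_empty himg.symm
    have hsum : ∑ b ∈ F, b = ∑ m ∈ G, a m := by
      rw [← himg, Finset.sum_image (fun m _ m' _ h => hmono.injective h)]
    have hcost : ∀ (H : Finset ℕ), ∑ m ∈ H, ε/2^(m+3) ≤ ε/4 := by
      intro H
      have hsub : H ⊆ Finset.range (H.sup id + 1) := fun m hm =>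
        Finset.mem_range.mpr (Nat.lt_succ_of_le (Finset.le_sup (f := id) hm))
      have hε8 : (0:ℝ) ≤ ε/8 := by positivity
      calc ∑ m ∈ H, ε/2^(m+3)
          ≤ ∑ m ∈ Finset.range (H.sup id + 1), ε/2^(m+3) :=
            Finset.sum_le_sum_of_subset_of_nonneg hsub (fun m _ _ => by positivity)
        _ = (ε/8) * ∑ m ∈ Finset.range (H.sup id + 1), (1/2:ℝ)^m := by
            rw [Finset.mul_sum]
            refine Finset.sum_congr rfl fun m _ => ?_
            rw [div_pow, one_pow, pow_add]
            norm_num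
            ring
        _ ≤ (ε/8) * 2 := by
            have hgeo := sum_geometric_two_le (H.sup id + 1)
            exact mul_le_mul_of_nonneg_left hgeo hε8
        _ ≤ ε/4 := by linarith
    have main : ∀ (H : Finset ℕ), H.Nonempty → ∀ x', SimRel f x x' →
        Thru f x (ε/2 + ∑ m ∈ H, ε/2^(m+3)) (∑ m ∈ H, a m) x' := by
      intro H hH
      induction hH using Finset.Nonempty.cons_induction with
      | singleton b =>
        intro x' hx'
        rw [Finset.sum_singleton, Finset.sum_singleton]
        refine (haT b x' hx').mono ?_
        have : (0:ℝ) ≤ ε/2^(b+3) := by positivity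
        linarith
      | cons b H hb hH IH =>
        intro x' hx'
        rw [Finset.sum_cons, Finset.sum_cons]
        exact (loop_concat_thru (haP b) (IH x' hx')).mono (le_of_eq (by ring))
    have hmem : (∑ m ∈ G, a m) ∈ NSet f x ε := by
      refine ⟨Finset.sum_pos (fun m _ => hapos m) hGne, ?_⟩
      intro x' hx'
      obtain ⟨u, hu, i, hi, hui⟩ := main G hGne x' hx'
      refine ⟨u, chain_mono hu ?_, i, hi, hui⟩
      have := hcost G
      linarith
    rw [hsum]
    exact hmem
end

section
/- If f:X→X is locally topologically mixing at x, then for every continuous map g:Y→Y of a compact metric space and every nonwandering point y of g, the point (x,y) is nonwandering for f×g. -/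
/-- `h` is locally topologically mixing at `x`: every open neighborhood of `x` returns
to itself at all sufficiently large times. -/
def LocallyMixingAt {Z : Type*} [TopologicalSpace Z] (h : Z → Z) (x : Z) : Prop :=
  ∀ U : Set Z, IsOpen U → x ∈ U → ∃ N : ℕ, ∀ n ≥ N, (h^[n] '' U ∩ U).Nonempty

/-- A nonwandering point returns at arbitrarily large times. -/
lemma nonwandering_large_times {Z : Type*} [TopologicalSpace Z] [T2Space Z]
    (g : Z → Z) (hg : Continuous g) (y : Z) (hy : NonwanderingPt g y)
    (V : Set Z) (hV : IsOpen V) (hyV : y ∈ V) (N : ℕ) :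
    ∃ m : ℕ, N ≤ m ∧ 0 < m ∧ (g^[m] '' V ∩ V).Nonempty := by
  by_cases hper : ∃ n : ℕ, 0 < n ∧ g^[n] y = y
  · obtain ⟨n, hn, hfix⟩ := hper
    refine ⟨n * (N + 1), ?_, ?_, y, ⟨y, hyV, ?_⟩, hyV⟩
    · calc N ≤ N + 1 := Nat.le_succ N
        _ ≤ n * (N + 1) := Nat.le_mul_of_pos_left _ hn
    · positivity
    · rw [Function.iterate_mul]
      exact Function.iterate_fixed hfix _
  · push_neg at hper
    have hsep : ∀ n : ℕ, ∃ W : Set Z, IsOpen W ∧ y ∈ W ∧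
        (0 < n → n < N → (g^[n] '' W ∩ W) = ∅) := by
      intro n
      by_cases hn : 0 < n
      · have hne : g^[n] y ≠ y := hper n hn
        obtain ⟨A, B, hA, hB, hgA, hyB, hAB⟩ := t2_separation hne
        have hcont : Continuous (g^[n]) := hg.iterate n
        refine ⟨(g^[n]) ⁻¹' A ∩ B, (hcont.isOpen_preimage A hA).inter hB,
          ⟨hgA, hyB⟩, fun _ _ => ?_⟩
        apply Set.eq_empty_of_forall_notMem
        rintro z ⟨⟨w, ⟨hwA, _⟩, rfl⟩, _, hzB⟩
        exact Set.disjoint_left.mp hAB hwA hzB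
      · exact ⟨Set.univ, isOpen_univ, trivial, fun h => absurd h hn⟩
    choose W hWopen hWmem hWempty using hsep
    set V' : Set Z := V ∩ ⋂ n ∈ Finset.Ico 1 N, W n with hV'def
    have hV'open : IsOpen V' := hV.inter (isOpen_biInter_finset fun n _ => hWopen n)
    have hyV' : y ∈ V' := ⟨hyV, Set.mem_biInter fun n _ => hWmem n⟩
    obtain ⟨m, hm, z, ⟨w, hwV', rfl⟩, hzV'⟩ := hy V' hV'open hyV'
    have hmN : N ≤ m := by
      by_contra hlt
      push_neg at hlt
      have hmem : m ∈ Finset.Ico 1 N := Finset.mem_Ico.mpr ⟨hm, hlt⟩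
      have hmem2 : g^[m] w ∈ g^[m] '' W m ∩ W m :=
        ⟨⟨w, Set.mem_iInter₂.mp hwV'.2 m hmem, rfl⟩,
          Set.mem_iInter₂.mp hzV'.2 m hmem⟩
      rw [hWempty m hm hlt] at hmem2
      exact hmem2
    exact ⟨m, hmN, hm, g^[m] w, ⟨w, hwV'.1, rfl⟩, hzV'.1⟩

/-- If `f` is locally topologically mixing at `x`, then `x` is product nonwandering. -/
theorem prod_nonwandering_of_locallyMixing {X : Type*} [MetricSpace X] [CompactSpace X]
    (f : X → X) (hf : Continuous f) (x : X) (hx : LocallyMixingAt f x) :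
    ∀ (Y : Type) (_ : MetricSpace Y) (_ : CompactSpace Y) (g : Y → Y),
      Continuous g → ∀ y : Y, NonwanderingPt g y →
        NonwanderingPt (Prod.map f g) (x, y) := by
  intro Y _ _ g hg y hy U hU hxyU
  obtain ⟨A, B, hA, hB, hxA, hyB, hABU⟩ := isOpen_prod_iff.mp hU x y hxyU
  obtain ⟨N, hN⟩ := hx A hA hxA
  obtain ⟨m, hmN, hm, b', ⟨b, hbB, rfl⟩, hgbB⟩ :=
    nonwandering_large_times g hg y hy B hB hyB N
  obtain ⟨a', ⟨a, haA, rfl⟩, hfaA⟩ := hN m hmN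
  refine ⟨m, hm, (f^[m] a, g^[m] b), ⟨(a, b), ?_, ?_⟩, hABU ⟨hfaA, hgbB⟩⟩
  · exact hABU ⟨haA, hbB⟩
  · rw [Prod.map_iterate]
    rfl
end

section
/- For every infinite set M of positive natural numbers, there exist a compact metric space Y, a continuous map g:Y→Y, a point y nonwandering for g, and an open neighborhood V of y such that {m>0 : g^m(V) ∩ V ≠ ∅} = M. -/
namespace NWAux

noncomputable def gr (x : ℝ) : ℝ :=
  if x ≤ 1/2 then x / (1 - min x (1/2)) else if x ≤ 1 then 2*(1-x) else x - 1

lemma gr_cont : Continuous gr := by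
  apply Continuous.if_le
  · apply Continuous.div continuous_id
    · fun_prop
    · intro x
      have : min x (1/2) ≤ 1/2 := min_le_right _ _
      intro h; linarith [this, sub_eq_zero.mp h]
  · apply Continuous.if_le (by fun_prop) (by fun_prop) continuous_id continuous_const
    intro x hx; simp only [id] at hx; rw [hx]; norm_num
  · exact continuous_id
  · exact continuous_const
  · intro x hx
    rw [hx]
    norm_num

noncomputable def ve (j : ℕ) : ℝ := 1/(j+1)
noncomputable def vs (m : ℕ) : ℝ := 1 + 1/m

lemma ve_pos (j : ℕ) : 0 < ve j := by unfold ve; positivity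
lemma ve_le_half (j : ℕ) (hj : 1 ≤ j) : ve j ≤ 1/2 := by
  have : (1:ℝ) ≤ j := by exact_mod_cast hj
  rw [ve, div_le_div_iff₀ (by positivity) (by norm_num)]
  linarith
lemma ve_zero : ve 0 = 1 := by norm_num [ve]
lemma vs_gt_one (m : ℕ) (hm : 1 ≤ m) : 1 < vs m := by
  have : (1:ℝ) ≤ m := by exact_mod_cast hm
  have : 0 < 1/(m:ℝ) := by positivity
  rw [vs]; linarith

lemma gr_zero : gr 0 = 0 := by norm_num [gr]

lemma gr_ve (j : ℕ) (hj : 1 ≤ j) : gr (ve j) = ve (j-1) := by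
  have h2 := ve_le_half j hj
  have hj' : (1:ℝ) ≤ j := by exact_mod_cast hj
  rw [gr, if_pos h2, min_eq_left h2, ve, ve]
  have : ((j - 1 : ℕ) : ℝ) = (j:ℝ) - 1 := by
    have : (1:ℕ) ≤ j := hj
    push_cast [this]; ring
  rw [this]
  rw [div_eq_div_iff]
  · field_simp; ring
  · have : 1/((j:ℝ)+1) < 1 := by rw [div_lt_one (by positivity)]; linarith
    linarith
  · linarith

lemma gr_ve0 : gr (ve 0) = 0 := by norm_num [gr, ve]

lemma gr_vs (m : ℕ) (hm : 1 ≤ m) : gr (vs m) = ve (m-1) := by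
  have h1 := vs_gt_one m hm
  have hm' : (1:ℝ) ≤ m := by exact_mod_cast hm
  rw [gr, if_neg (by linarith), if_neg (by linarith), vs, ve]
  have : ((m - 1 : ℕ) : ℝ) = (m:ℝ) - 1 := by push_cast [hm]; ring
  rw [this]
  rw [sub_add_cancel]; ring

lemma gr_iter_ve (n j : ℕ) : gr^[n] (ve j) = if n ≤ j then ve (j - n) else 0 := by
  induction n with
  | zero => simp
  | succ n ih =>
    rw [Function.iterate_succ_apply', ih]
    by_cases h : n + 1 ≤ j
    · rw [if_pos (by omega), if_pos h]
      rw [gr_ve (j - n) (by omega)]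
      congr 1
    · by_cases h' : n ≤ j
      · have : j - n = 0 := by omega
        rw [if_pos h', this, gr_ve0]
        rw [if_neg h]
      · rw [if_neg h', gr_zero]
        rw [if_neg h]

lemma gr_iter_vs (n m : ℕ) (hm : 1 ≤ m) (hn : 1 ≤ n) :
    gr^[n] (vs m) = if n ≤ m then ve (m - n) else 0 := by
  obtain ⟨k, rfl⟩ : ∃ k, n = k + 1 := ⟨n - 1, by omega⟩
  rw [Function.iterate_succ_apply, gr_vs m hm, gr_iter_ve]
  by_cases h : k + 1 ≤ m
  · rw [if_pos (by omega), if_pos h]; congr 1; omega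
  · rw [if_neg (by omega), if_neg h]

end NWAux

namespace NWAux

open scoped Classical in
noncomputable def S (M : Set ℕ) : Set ℝ :=
  insert 0 (Set.range ve) ∪
    insert 1 (Set.range (fun m => if m ∈ M then vs m else 1))

lemma S_compact (M : Set ℕ) : IsCompact (S M) := by
  apply IsCompact.union
  · apply Filter.Tendsto.isCompact_insert_range
    have : Filter.Tendsto (fun n : ℕ => 1 / ((n : ℝ) + 1)) Filter.atTop (nhds 0) :=
      tendsto_one_div_add_atTop_nhds_zero_nat
    exact this.congr (fun n => by simp [ve])
  · apply Filter.Tendsto.isCompact_insert_range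
    have h2 : Filter.Tendsto (fun m : ℕ => (1:ℝ) + 1/(m:ℝ)) Filter.atTop (nhds 1) := by
      have h0 : Filter.Tendsto (fun m : ℕ => 1/(m:ℝ)) Filter.atTop (nhds 0) :=
        tendsto_one_div_atTop_nhds_zero_nat
      simpa using h0.const_add 1
    apply tendsto_of_tendsto_of_tendsto_of_le_of_le tendsto_const_nhds h2
    · intro m
      dsimp only
      split
      · rw [vs]
        have : (0:ℝ) ≤ 1/(m:ℝ) := by positivity
        linarith
      · exact le_refl _
    · intro m
      dsimp only
      split
      · exact le_refl _
      · have : (0:ℝ) ≤ 1/(m:ℝ) := by positivity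
        linarith

open scoped Classical in
lemma zero_mem_S (M : Set ℕ) : (0:ℝ) ∈ S M := Or.inl (Or.inl rfl)
open scoped Classical in
lemma ve_mem_S (M : Set ℕ) (j : ℕ) : ve j ∈ S M := Or.inl (Or.inr ⟨j, rfl⟩)
open scoped Classical in
lemma vs_mem_S (M : Set ℕ) {m : ℕ} (hm : m ∈ M) : vs m ∈ S M :=
  Or.inr (Or.inr ⟨m, by simp [hm]⟩)

open scoped Classical in
lemma mem_S_iff (M : Set ℕ) (x : ℝ) :
    x ∈ S M ↔ x = 0 ∨ (∃ j, x = ve j) ∨ (∃ m ∈ M, x = vs m) := by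
  constructor
  · rintro ((rfl | ⟨j, rfl⟩) | (rfl | ⟨m, hm⟩))
    · exact Or.inl rfl
    · exact Or.inr (Or.inl ⟨j, rfl⟩)
    · exact Or.inr (Or.inl ⟨0, ve_zero.symm⟩)
    · simp only at hm
      by_cases h : m ∈ M
      · rw [if_pos h] at hm; exact Or.inr (Or.inr ⟨m, h, hm.symm⟩)
      · rw [if_neg h] at hm; exact Or.inr (Or.inl ⟨0, by rw [ve_zero, ← hm]⟩)
  · rintro (rfl | ⟨j, rfl⟩ | ⟨m, hm, rfl⟩)
    · exact zero_mem_S M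
    · exact ve_mem_S M j
    · exact vs_mem_S M hm

lemma gr_maps (M : Set ℕ) (hMpos : ∀ m ∈ M, 0 < m) :
    Set.MapsTo gr (S M) (S M) := by
  intro x hx
  rw [mem_S_iff] at hx
  rcases hx with rfl | ⟨j, rfl⟩ | ⟨m, hm, rfl⟩
  · rw [gr_zero]; exact zero_mem_S M
  · rcases Nat.eq_zero_or_pos j with rfl | hj
    · rw [gr_ve0]; exact zero_mem_S M
    · rw [gr_ve j hj]; exact ve_mem_S M _
  · rw [gr_vs m (hMpos m hm)]; exact ve_mem_S M _

end NWAux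

namespace NWAux

open scoped Classical in
lemma restrict_iter_val (M : Set ℕ) (h : Set.MapsTo gr (S M) (S M)) (n : ℕ)
    (z : ↥(S M)) : (((h.restrict gr (S M) (S M))^[n] z) : ℝ) = gr^[n] (z : ℝ) := by
  induction n with
  | zero => rfl
  | succ n ih =>
    rw [Function.iterate_succ_apply', Function.iterate_succ_apply',
      Set.MapsTo.val_restrict_apply, ih]

lemma ve_half_eq_zero {j : ℕ} (hj : (1:ℝ)/2 < ve j) : j = 0 := by
  by_contra h
  exact absurd hj (not_lt.mpr (ve_le_half j (by omega)))

end NWAux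

/-- For every infinite set `M` of positive integers there is a map of a compact metric
space, a nonwandering point `y`, and an open neighborhood `V` of `y` whose set of return
times is exactly `M`. -/
theorem exists_nonwandering_with_return_times (M : Set ℕ) (hM : M.Infinite)
    (hMpos : ∀ m ∈ M, 0 < m) :
    ∃ (Y : Type) (_ : MetricSpace Y) (_ : CompactSpace Y) (g : Y → Y),
      Continuous g ∧ ∃ (y : Y) (V : Set Y), IsOpen V ∧ y ∈ V ∧ NonwanderingPt g y ∧
        {m : ℕ | 0 < m ∧ (g^[m] '' V ∩ V).Nonempty} = M := by
  classical
  open NWAux in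
  refine ⟨↥(S M), inferInstance, isCompact_iff_compactSpace.mp (S_compact M),
    (gr_maps M hMpos).restrict gr (S M) (S M),
    gr_cont.restrict (gr_maps M hMpos), ?_⟩
  set hmaps := gr_maps M hMpos
  set g : ↥(S M) → ↥(S M) := hmaps.restrict gr (S M) (S M) with hg
  have hiter : ∀ (n : ℕ) (z : ↥(S M)), ((g^[n] z : ↥(S M)) : ℝ) = gr^[n] (z : ℝ) :=
    restrict_iter_val M hmaps
  have h1S : (1:ℝ) ∈ S M := ve_zero ▸ ve_mem_S M 0
  refine ⟨⟨1, h1S⟩, Subtype.val ⁻¹' Set.Ioi (1/2 : ℝ),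
    isOpen_Ioi.preimage continuous_subtype_val, by norm_num, ?_, ?_⟩
  · -- nonwandering
    intro U hU hyU
    rw [Metric.isOpen_iff] at hU
    obtain ⟨ε, hε, hball⟩ := hU _ hyU
    obtain ⟨m, hmM, hmgt⟩ := hM.exists_gt ⌈1/ε⌉₊
    have hm1 : 1 ≤ m := by omega
    have hmR : (1:ℝ)/ε < m := lt_of_le_of_lt (Nat.le_ceil _) (by exact_mod_cast hmgt)
    have hmpos : (0:ℝ) < m := lt_of_le_of_lt (by positivity) hmR
    have hlt : 1/(m:ℝ) < ε := by
      have h2 : 1 < (m:ℝ)*ε := (div_lt_iff₀ hε).mp hmR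
      rw [div_lt_iff₀ hmpos]
      nlinarith
    have hsm : vs m ∈ S M := vs_mem_S M hmM
    have hsmU : (⟨vs m, hsm⟩ : ↥(S M)) ∈ U := by
      apply hball
      rw [Metric.mem_ball, Subtype.dist_eq, Real.dist_eq]
      simp only [vs]
      rw [show (1 + 1/(m:ℝ) - 1) = 1/(m:ℝ) by ring, abs_of_pos (by positivity)]
      exact hlt
    refine ⟨m, hm1, ⟨⟨1, h1S⟩, ⟨⟨vs m, hsm⟩, hsmU, ?_⟩, hyU⟩⟩
    apply Subtype.ext
    rw [hiter m, gr_iter_vs m m hm1 hm1, if_pos le_rfl, Nat.sub_self, ve_zero]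
  · -- return-set equality
    ext n
    simp only [Set.mem_setOf_eq]
    constructor
    · rintro ⟨hn, w, ⟨u, huV, rfl⟩, hwV⟩
      have huS := u.2
      rw [mem_S_iff] at huS
      have huV' : (1:ℝ)/2 < (u:ℝ) := huV
      have hwV' : (1:ℝ)/2 < ((g^[n] u : ↥(S M)) : ℝ) := hwV
      rw [hiter n] at hwV'
      rcases huS with h0 | ⟨j, hj⟩ | ⟨m, hmM, hmv⟩
      · rw [h0] at huV'; norm_num at huV'
      · have hj0 : j = 0 := ve_half_eq_zero (hj ▸ huV')
        rw [hj, hj0, gr_iter_ve, if_neg (by omega)] at hwV'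
        norm_num at hwV'
      · have hm1 : 1 ≤ m := hMpos m hmM
        rw [hmv, gr_iter_vs n m hm1 hn] at hwV'
        by_cases hnm : n ≤ m
        · rw [if_pos hnm] at hwV'
          have : m - n = 0 := ve_half_eq_zero hwV'
          have : n = m := by omega
          rwa [this]
        · rw [if_neg hnm] at hwV'; norm_num at hwV'
    · intro hnM
      have hn1 : 1 ≤ n := hMpos n hnM
      refine ⟨hn1, ⟨1, h1S⟩, ⟨⟨vs n, vs_mem_S M hnM⟩, ?_, ?_⟩, by norm_num⟩
      · show (1:ℝ)/2 < vs n
        have := vs_gt_one n hn1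
        linarith
      · apply Subtype.ext
        rw [hiter n, gr_iter_vs n n hn1 hn1, if_pos le_rfl, Nat.sub_self, ve_zero]
end

section
/- If f:X→X is not locally topologically mixing at x, then x is not product nonwandering: there exist a compact metric space Y, a continuous map g:Y→Y, and a nonwandering point y of g such that (x,y) is not nonwandering for f×g. -/
open Set Function Metric

noncomputable section ProdNW

/-- the basic sequence 2^{-p} -/
def cR : ℕ → ℝ := fun p => (1/2 : ℝ) ^ p

lemma cR_pos (p : ℕ) : 0 < cR p := by unfold cR; positivity

lemma cR_le_one (p : ℕ) : cR p ≤ 1 := pow_le_one₀ (by norm_num) (by norm_num)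

lemma cR_zero : cR 0 = 1 := by simp [cR]

lemma cR_succ (p : ℕ) : cR (p+1) = (1/2) * cR p := by
  simp [cR, pow_succ]; ring

lemma two_cR_succ (p : ℕ) : 2 * cR (p+1) = cR p := by rw [cR_succ]; ring

lemma cR_succ_le_half (p : ℕ) : cR (p+1) ≤ 1/2 := by
  have := cR_le_one p
  rw [cR_succ]; linarith

lemma cR_antitone : Antitone cR := fun a b hab => by
  apply pow_le_pow_of_le_one (by norm_num) (by norm_num) hab

/-- the main map on ℝ -/
def gR : ℝ → ℝ := fun r => if r ≤ 1/2 then 2*r else 2*(r-1)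

lemma gR_of_le {r : ℝ} (h : r ≤ 1/2) : gR r = 2*r := if_pos h
lemma gR_of_gt {r : ℝ} (h : 1/2 < r) : gR r = 2*(r-1) := if_neg (not_le.mpr h)

lemma gR_zero : gR 0 = 0 := by rw [gR_of_le (by norm_num)]; ring
lemma gR_one : gR 1 = 0 := by rw [gR_of_gt (by norm_num)]; ring

lemma gR_cR_succ (p : ℕ) : gR (cR (p+1)) = cR p := by
  rw [gR_of_le (cR_succ_le_half p)]; exact two_cR_succ p

lemma gR_one_add (s : ℕ) : gR (1 + cR s) = 2 * cR s := by
  have := cR_pos s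
  rw [gR_of_gt (by linarith)]; ring

lemma gR_iter_zero (n : ℕ) : gR^[n] 0 = 0 := Function.iterate_fixed gR_zero n

lemma gR_iter_one {n : ℕ} (hn : 0 < n) : gR^[n] 1 = 0 := by
  obtain ⟨m, rfl⟩ := Nat.exists_eq_add_of_lt hn
  rw [Nat.zero_add, Function.iterate_succ_apply, gR_one, gR_iter_zero]

lemma gR_iter_cR (k p : ℕ) : gR^[k] (cR (p + k)) = cR p := by
  induction k with
  | zero => simp
  | succ k ih =>
    rw [Function.iterate_succ_apply, show p + (k+1) = (p+k) + 1 from rfl,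
      gR_cR_succ, ih]

lemma gR_iter_cR_self (p : ℕ) : gR^[p] (cR p) = 1 := by
  have := gR_iter_cR p 0
  rw [Nat.zero_add] at this
  rw [this, cR_zero]

lemma gR_iter_cR_of_gt {k p : ℕ} (h : p < k) : gR^[k] (cR p) = 0 := by
  obtain ⟨m, rfl⟩ := Nat.exists_eq_add_of_lt h
  rw [show p + m + 1 = (m+1) + p by ring, Function.iterate_add_apply,
    gR_iter_cR_self, gR_iter_one (Nat.succ_pos m)]

lemma gR_iter_double (m n : ℕ) :
    gR^[n+1] (1 + cR (m+1)) = gR^[n] (cR m) := by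
  rw [Function.iterate_succ_apply, gR_one_add, two_cR_succ]

lemma gR_iter_double_self (m : ℕ) : gR^[m+1] (1 + cR (m+1)) = 1 := by
  rw [gR_iter_double, gR_iter_cR_self]

section withS

variable (S : Set ℕ)

open Classical in
/-- auxiliary sequence tending to 1, hitting 1 + 2^{-s} for s ∈ S -/
def vR : ℕ → ℝ := fun s => if s ∈ S then 1 + cR s else 1

/-- the compact space: 0, the points 2^{-p}, and 1 + 2^{-s} for s ∈ S -/
def Yset : Set ℝ := insert 0 (Set.range cR) ∪ insert 1 (Set.range (vR S))

variable {S}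

lemma one_mem_Yset : (1:ℝ) ∈ Yset S := Or.inl (Or.inr ⟨0, cR_zero⟩)

lemma cR_mem_Yset (p : ℕ) : cR p ∈ Yset S := Or.inl (Or.inr ⟨p, rfl⟩)

lemma zero_mem_Yset : (0:ℝ) ∈ Yset S := Or.inl (Or.inl rfl)

lemma one_add_mem_Yset {s : ℕ} (hs : s ∈ S) : 1 + cR s ∈ Yset S := by
  refine Or.inr (Or.inr ⟨s, ?_⟩)
  simp [vR, hs]

lemma mem_Yset_elim {r : ℝ} (h : r ∈ Yset S) :
    r = 0 ∨ (∃ p, r = cR p) ∨ (∃ s ∈ S, r = 1 + cR s) := by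
  rcases h with (rfl | ⟨p, rfl⟩) | (rfl | ⟨s, rfl⟩)
  · exact Or.inl rfl
  · exact Or.inr (Or.inl ⟨p, rfl⟩)
  · exact Or.inr (Or.inl ⟨0, cR_zero.symm⟩)
  · by_cases hs : s ∈ S
    · exact Or.inr (Or.inr ⟨s, hs, by simp [vR, hs]⟩)
    · exact Or.inr (Or.inl ⟨0, by simp [vR, hs, cR_zero]⟩)

lemma Yset_le_half_of_lt_one {r : ℝ} (h : r ∈ Yset S) (hr : r < 1) : r ≤ 1/2 := by
  rcases mem_Yset_elim h with rfl | ⟨p, rfl⟩ | ⟨s, _, rfl⟩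
  · norm_num
  · cases p with
    | zero => rw [cR_zero] at hr; linarith
    | succ p => exact cR_succ_le_half p
  · have := cR_pos s; linarith

lemma Yset_gt_half {r : ℝ} (h : r ∈ Yset S) (hr : 1/2 < r) :
    r = 1 ∨ ∃ s ∈ S, r = 1 + cR s := by
  rcases mem_Yset_elim h with rfl | ⟨p, rfl⟩ | ⟨s, hs, rfl⟩
  · linarith
  · cases p with
    | zero => exact Or.inl cR_zero
    | succ p => exact absurd hr (not_lt.mpr (cR_succ_le_half p))
  · exact Or.inr ⟨s, hs, rfl⟩

lemma Yset_mapsTo (h0 : 0 ∉ S) : Set.MapsTo gR (Yset S) (Yset S) := by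
  intro r hr
  rcases mem_Yset_elim hr with rfl | ⟨p, rfl⟩ | ⟨s, hs, rfl⟩
  · rw [gR_zero]; exact zero_mem_Yset
  · cases p with
    | zero => rw [cR_zero, gR_one]; exact zero_mem_Yset
    | succ p => rw [gR_cR_succ]; exact cR_mem_Yset p
  · cases s with
    | zero => exact absurd hs h0
    | succ m =>
      rw [gR_one_add, two_cR_succ]; exact cR_mem_Yset m

lemma Yset_continuousOn : ContinuousOn gR (Yset S) := by
  intro r hr
  rcases lt_or_ge r 1 with hlt | hge
  · -- near r, points of Yset are ≤ 1/2, where gR = 2*·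
    have key : ∀ᶠ r' in nhdsWithin r (Yset S), gR r' = 2 * r' := by
      have hmem : Iio (1:ℝ) ∈ nhdsWithin r (Yset S) :=
        nhdsWithin_le_nhds (Iio_mem_nhds hlt)
      filter_upwards [hmem, self_mem_nhdsWithin] with r' h1 h2
      exact gR_of_le (Yset_le_half_of_lt_one h2 h1)
    have hc : ContinuousWithinAt (fun r' => 2 * r') (Yset S) r :=
      (continuous_const.mul continuous_id).continuousWithinAt
    exact hc.congr_of_eventuallyEq key
      (gR_of_le (Yset_le_half_of_lt_one hr hlt))
  · -- near r, points of Yset are > 1/2, where gR = 2*(· - 1)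
    have key : ∀ᶠ r' in nhdsWithin r (Yset S), gR r' = 2 * (r' - 1) := by
      have hmem : Ioi (1/2 : ℝ) ∈ nhdsWithin r (Yset S) :=
        nhdsWithin_le_nhds (Ioi_mem_nhds (by linarith))
      filter_upwards [hmem] with r' h1
      exact gR_of_gt h1
    have hc : ContinuousWithinAt (fun r' => 2 * (r' - 1)) (Yset S) r :=
      (continuous_const.mul (continuous_id.sub continuous_const)).continuousWithinAt
    exact hc.congr_of_eventuallyEq key (gR_of_gt (by linarith))

lemma vR_tendsto : Filter.Tendsto (vR S) Filter.atTop (nhds 1) := by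
  have hc : Filter.Tendsto (fun s : ℕ => 1 + cR s) Filter.atTop (nhds 1) := by
    have : Filter.Tendsto cR Filter.atTop (nhds 0) :=
      tendsto_pow_atTop_nhds_zero_of_lt_one (by norm_num) (by norm_num)
    simpa using (tendsto_const_nhds.add this)
  apply tendsto_of_tendsto_of_tendsto_of_le_of_le tendsto_const_nhds hc
  · intro s
    by_cases hs : s ∈ S <;> simp [vR, hs, (cR_pos s).le]
  · intro s
    by_cases hs : s ∈ S <;> simp [vR, hs, (cR_pos s).le]

lemma Yset_isCompact : IsCompact (Yset S) := by
  have h1 : Filter.Tendsto cR Filter.atTop (nhds 0) :=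
    tendsto_pow_atTop_nhds_zero_of_lt_one (by norm_num) (by norm_num)
  exact h1.isCompact_insert_range.union vR_tendsto.isCompact_insert_range

end withS

end ProdNW

lemma prodMap_iterate {α β : Type*} (f : α → α) (g : β → β) (n : ℕ) :
    (Prod.map f g)^[n] = Prod.map f^[n] g^[n] := by
  induction n with
  | zero => rfl
  | succ n ih => rw [Function.iterate_succ, Function.iterate_succ,
      Function.iterate_succ, ih, Prod.map_comp_map]

/-- If `f` is not locally topologically mixing at `x`, then `x` is not product
nonwandering. -/
theorem not_prod_nonwandering_of_not_locallyMixing {X : Type*} [MetricSpace X]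
    [CompactSpace X] (f : X → X) (hf : Continuous f) (x : X)
    (hx : ¬ LocallyMixingAt f x) :
    ∃ (Y : Type) (_ : MetricSpace Y) (_ : CompactSpace Y) (g : Y → Y),
      Continuous g ∧ ∃ y : Y, NonwanderingPt g y ∧
        ¬ NonwanderingPt (Prod.map f g) (x, y) := by
  classical
  rw [LocallyMixingAt] at hx
  push_neg at hx
  obtain ⟨U, hUopen, hxU, hU⟩ := hx
  -- hU : ∀ N, ∃ n ≥ N, ¬(f^[n] '' U ∩ U).Nonempty
  set S : Set ℕ := {n | 0 < n ∧ f^[n] '' U ∩ U = ∅} with hS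
  have hSunbdd : ∀ N : ℕ, ∃ s ∈ S, N ≤ s := by
    intro N
    obtain ⟨n, hn1, hn2⟩ := hU (N + 1)
    exact ⟨n, ⟨by omega, hn2⟩, by omega⟩
  have h0S : 0 ∉ S := fun h => absurd h.1 (lt_irrefl 0)
  have hSempty : ∀ n ∈ S, f^[n] '' U ∩ U = ∅ := fun n hn => hn.2
  have hSpos : ∀ n ∈ S, 0 < n := fun n hn => hn.1
  refine ⟨Yset S, inferInstance, isCompact_iff_compactSpace.mp Yset_isCompact,
    (Yset_mapsTo h0S).restrict gR _ _,
    Yset_continuousOn.mapsToRestrict (Yset_mapsTo h0S), ⟨1, one_mem_Yset⟩, ?_, ?_⟩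
  · -- nonwandering
    set g := (Yset_mapsTo (S := S) h0S).restrict gR _ _ with hg
    have hval : ∀ (n : ℕ) (z : Yset S), ((g^[n] z : Yset S) : ℝ) = gR^[n] (z : ℝ) := by
      intro n
      induction n with
      | zero => intro z; rfl
      | succ n ih =>
        intro z
        rw [Function.iterate_succ_apply, Function.iterate_succ_apply, ih]
        rfl
    intro V hV h1V
    obtain ⟨ε, hε, hball⟩ := Metric.isOpen_iff.mp hV _ h1V
    obtain ⟨N, hN⟩ := exists_pow_lt_of_lt_one hε (show (1:ℝ)/2 < 1 by norm_num)
    obtain ⟨s, hsS, hsN⟩ := hSunbdd N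
    have hcs : cR s < ε := lt_of_le_of_lt (cR_antitone hsN) hN
    set z : Yset S := ⟨1 + cR s, one_add_mem_Yset hsS⟩ with hz
    have hzV : z ∈ V := by
      apply hball
      rw [Metric.mem_ball, Subtype.dist_eq]
      simp only [hz]
      rw [Real.dist_eq]
      rw [show (1 + cR s - 1 : ℝ) = cR s by ring, abs_of_pos (cR_pos s)]
      exact hcs
    refine ⟨s, hSpos s hsS, ⟨⟨1, one_mem_Yset⟩, ⟨⟨z, hzV, ?_⟩, h1V⟩⟩⟩
    have hspos := hSpos s hsS
    obtain ⟨m, rfl⟩ : ∃ m, s = m + 1 := ⟨s - 1, by omega⟩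
    apply Subtype.ext
    rw [hval]
    exact gR_iter_double_self m
  · -- not product nonwandering
    set g := (Yset_mapsTo (S := S) h0S).restrict gR _ _ with hg
    have hval : ∀ (n : ℕ) (z : Yset S), ((g^[n] z : Yset S) : ℝ) = gR^[n] (z : ℝ) := by
      intro n
      induction n with
      | zero => intro z; rfl
      | succ n ih =>
        intro z
        rw [Function.iterate_succ_apply, Function.iterate_succ_apply, ih]
        rfl
    intro hNW
    set VY : Set (Yset S) := {z : Yset S | 1/2 < (z : ℝ)} with hVY
    have hVYopen : IsOpen VY :=
      isOpen_induced_iff.mpr ⟨Ioi (1/2), isOpen_Ioi, rfl⟩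
    obtain ⟨n, hn, ⟨a, b⟩, ⟨⟨c, d⟩, hcd, hab⟩, habW⟩ :=
      hNW (U ×ˢ VY) (hUopen.prod hVYopen) ⟨hxU, by simp [hVY]; norm_num⟩
    rw [prodMap_iterate] at hab
    have hcU : c ∈ U := hcd.1
    have hdV : d ∈ VY := hcd.2
    obtain ⟨rfl, rfl⟩ := Prod.mk.injEq .. ▸ hab
    have haU : f^[n] c ∈ U := habW.1
    have hbV : g^[n] d ∈ VY := habW.2
    -- the real value of g^[n] d is > 1/2
    have hgt : 1/2 < gR^[n] (d : ℝ) := by rw [← hval]; exact hbV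
    -- d itself has value > 1/2, hence value 1 or 1 + cR s with s ∈ S
    have hd2 : (1:ℝ)/2 < (d : ℝ) := hdV
    have hnS : n ∈ S := by
      rcases Yset_gt_half d.2 hd2 with hd1 | ⟨s, hsS, hds⟩
      · exfalso
        rw [hd1, gR_iter_one hn] at hgt
        norm_num at hgt
      · have hspos := hSpos s hsS
        obtain ⟨m, rfl⟩ : ∃ m, s = m + 1 := ⟨s - 1, by omega⟩
        rw [hds] at hgt
        obtain ⟨k, rfl⟩ : ∃ k, n = k + 1 := ⟨n - 1, by omega⟩
        rw [gR_iter_double] at hgt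
        rcases lt_trichotomy k m with h | h | h
        · exfalso
          obtain ⟨j, rfl⟩ := Nat.exists_eq_add_of_lt h
          rw [show k + j + 1 = (j+1) + k by ring, gR_iter_cR] at hgt
          exact absurd hgt (not_lt.mpr (cR_succ_le_half j))
        · subst h
          exact hsS
        · exfalso
          rw [gR_iter_cR_of_gt h] at hgt
          norm_num at hgt
    -- but n ∈ S means f^[n] '' U ∩ U is empty, contradiction
    have hmem : f^[n] c ∈ f^[n] '' U ∩ U := ⟨⟨c, hcU, rfl⟩, haU⟩
    rw [hSempty n hnS] at hmem
    exact hmem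
end

section
/- For continuous f:X→X and g:Y→Y on compact metric spaces, if x is chain recurrent through X∖Int(Fix(f)) and y is chain recurrent through Y∖Int(Fix(g)), then (x,y) is chain recurrent through (X×Y)∖Int(Fix(f×g)) for f×g with the sum metric. -/
/-- `p` is chain recurrent through `A` for `h` (distances measured by `d`): for every
ε > 0 there is an ε-chain from `p` to itself lying entirely in `A`. -/
def ChainRecThrough {Z : Type*} (d : Z → Z → ℝ) (h : Z → Z) (A : Set Z) (p : Z) : Prop :=
  ∀ ε > (0 : ℝ), ∃ n : ℕ, 1 ≤ n ∧ ∃ u : ℕ → Z, u 0 = p ∧ u n = p ∧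
    (∀ i ≤ n, u i ∈ A) ∧ ∀ i < n, d (h (u i)) (u (i + 1)) ≤ ε

lemma mod_chain_step {Z : Type*} (d : Z → Z → ℝ) (h : Z → Z) (u : ℕ → Z) (n : ℕ) (ε : ℝ)
    (hn : 1 ≤ n) (h0 : u 0 = u n) (hc : ∀ i < n, d (h (u i)) (u (i + 1)) ≤ ε) (i : ℕ) :
    d (h (u (i % n))) (u ((i + 1) % n)) ≤ ε := by
  have key : (i + 1) % n = (i % n + 1) % n := by
    conv_lhs => rw [← Nat.mod_add_div i n]
    rw [show i % n + n * (i / n) + 1 = i % n + 1 + n * (i / n) by ring,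
      Nat.add_mul_mod_self_left]
  have hr : i % n < n := Nat.mod_lt _ hn
  rcases Nat.lt_or_ge (i % n + 1) n with hlt | hge
  · rw [key, Nat.mod_eq_of_lt hlt]
    exact hc _ hr
  · have heq : i % n + 1 = n := le_antisymm hr hge
    rw [key, heq, Nat.mod_self, h0]
    have := hc (i % n) hr
    rwa [heq] at this

/-- If `x` is chain recurrent through `X ∖ Int(Fix f)` and `y` through `Y ∖ Int(Fix g)`,
then `(x, y)` is chain recurrent through `(X × Y) ∖ Int(Fix (f × g))` for `f × g` with
the sum metric. -/
theorem chainRecThrough_prod {X Y : Type*} [MetricSpace X] [CompactSpace X]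
    [MetricSpace Y] [CompactSpace Y] (f : X → X) (g : Y → Y)
    (hf : Continuous f) (hg : Continuous g) (x : X) (y : Y)
    (hx : ChainRecThrough dist f (interior {z : X | f z = z})ᶜ x)
    (hy : ChainRecThrough dist g (interior {z : Y | g z = z})ᶜ y) :
    ChainRecThrough (fun p q : X × Y => dist p.1 q.1 + dist p.2 q.2) (Prod.map f g)
      (interior {p : X × Y | Prod.map f g p = p})ᶜ (x, y) := by
  intro ε hε
  obtain ⟨n, hn, ux, hx0, hxn, hxA, hxd⟩ := hx (ε / 2) (by linarith)
  obtain ⟨m, hm, uy, hy0, hym, hyA, hyd⟩ := hy (ε / 2) (by linarith)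
  have hset : {p : X × Y | Prod.map f g p = p}
      = {z : X | f z = z} ×ˢ {z : Y | g z = z} := by
    ext p
    simp [Prod.ext_iff, Set.mem_prod, Prod.map]
  refine ⟨n * m, Nat.mul_pos hn hm, fun i => (ux (i % n), uy (i % m)), ?_, ?_, ?_, ?_⟩
  · simp [Nat.zero_mod, hx0, hy0]
  · simp [Nat.mul_mod_right, Nat.mul_mod_left, hx0, hy0]
  · intro i _
    rw [hset, interior_prod_eq]
    intro hmem
    exact hxA (i % n) (le_of_lt (Nat.mod_lt _ hn)) hmem.1
  · intro i _
    have h1 := mod_chain_step dist f ux n (ε / 2) hn (hx0.trans hxn.symm) hxd i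
    have h2 := mod_chain_step dist g uy m (ε / 2) hm (hy0.trans hym.symm) hyd i
    simp only [Prod.map]
    linarith
end
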